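/- Let $C_z, C_p, C_S > 0$ with $\sqrt{2C_pC_S} > 2\sqrt{C_z}$. Define the 1D front speed $v(R_1, R_2) = R_2 + \sqrt{C_z}\tanh(R_1/\sqrt{C_z})$ where $R_2 = R - R_1$, and suppose $R_2(R_1)$ is the nonnegative root of the relation in the 1D free boundary model. Then $v(R_1, R_2(R_1)) \to \sqrt{2C_pC_S} - \sqrt{C_z}$ as $R_1 \to \infty$, with error $O(e^{-2R_1/\sqrt{C_z}})$. -/

import Mathlib

/-!
Completing the square in the relation for `R₂` gives the front speed in closed form,
`v = √(2 C_p C_S - C_z sech² (R₁/√C_z)) - √C_z`. Its distance to `√(2 C_p C_S) - √C_z` is then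
at most `C_z sech² (R₁/√C_z) / √(2 C_p C_S)`, since `√a - √(a - ε) ≤ ε / √a`, and
`sech² x ≤ 4 e^{-2x}` because `cosh x ≥ eˣ / 2`.
-/

open Filter Asymptotics Real

namespace Real

lemma abs_sqrt_sub_sub_sqrt_le {a ε : ℝ} (hε : 0 ≤ ε) (hεa : ε ≤ a) :
    |√(a - ε) - √a| ≤ ε / √a := by
  rw [abs_of_nonpos (sub_nonpos.mpr (sqrt_le_sqrt (by linarith)))]
  rcases (sqrt_nonneg a).eq_or_lt with ha | ha
  · have ha0 : a ≤ 0 := sqrt_eq_zero'.mp ha.symm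
    simp [show ε = 0 by linarith, show a = 0 by linarith]
  · rw [le_div_iff₀ ha]
    have : √(a - ε) * √(a - ε) ≤ √(a - ε) * √a :=
      mul_le_mul_of_nonneg_left (sqrt_le_sqrt (by linarith)) (sqrt_nonneg _)
    nlinarith [mul_self_sqrt (sub_nonneg.mpr hεa), mul_self_sqrt (hε.trans hεa)]

lemma one_sub_tanh_sq_le (x : ℝ) : 1 - tanh x ^ 2 ≤ 4 * exp (-2 * x) := by
  have hcosh : exp x / 2 ≤ cosh x := by
    rw [cosh_eq]; linarith [exp_pos (-x)]
  have hsech : 1 - tanh x ^ 2 = (cosh x ^ 2)⁻¹ := by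
    rw [tanh_eq_sinh_div_cosh]
    field_simp [(cosh_pos x).ne']
    linear_combination cosh_sq_sub_sinh_sq x
  rw [hsech, show -2 * x = -(x + x) by ring, exp_neg, exp_add, ← div_eq_mul_inv,
    inv_le_comm₀ (by positivity) (by positivity), inv_div]
  nlinarith [exp_pos x]

end Real

lemma abs_add_mul_sub_le_of_quadratic {s t r A : ℝ} (hs : 0 ≤ s) (ht : |t| ≤ 1) (hr : 0 ≤ r)
    (hq : r ^ 2 + 2 * s * (1 + t) * r + 2 * s ^ 2 * (1 + t) - A = 0) :
    |r + s * t - (√A - s)| ≤ s ^ 2 * (1 - t ^ 2) / √A := by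
  have hε : 0 ≤ s ^ 2 * (1 - t ^ 2) :=
    mul_nonneg (sq_nonneg s) (sub_nonneg.mpr ((sq_le_one_iff_abs_le_one t).mpr ht))
  have hsq : (r + s * (1 + t)) ^ 2 = A - s ^ 2 * (1 - t ^ 2) := by linear_combination hq
  have hroot : r + s * (1 + t) = √(A - s ^ 2 * (1 - t ^ 2)) := by
    rw [← hsq, sqrt_sq (by nlinarith [(abs_le.mp ht).1])]
  calc |r + s * t - (√A - s)| = |√(A - s ^ 2 * (1 - t ^ 2)) - √A| := by
        rw [← hroot]; ring_nf
    _ ≤ _ := abs_sqrt_sub_sub_sqrt_le hε (by linarith [hsq ▸ sq_nonneg (r + s * (1 + t))])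

theorem stmt5_general (Cz Cp CS : ℝ) (hz : 0 < Cz)
    (R2 : ℝ → ℝ)
    (hR2 : ∀ R1 : ℝ, 0 ≤ R1 → 0 ≤ R2 R1 ∧
      (R2 R1) ^ 2 + 2 * Real.sqrt Cz * (1 + Real.tanh (R1 / Real.sqrt Cz)) * R2 R1 +
        2 * Cz * (1 + Real.tanh (R1 / Real.sqrt Cz)) - 2 * Cp * CS = 0)
    (v : ℝ → ℝ)
    (hv : ∀ R1, v R1 = R2 R1 + Real.sqrt Cz * Real.tanh (R1 / Real.sqrt Cz)) :
    Tendsto v atTop (nhds (Real.sqrt (2 * Cp * CS) - Real.sqrt Cz)) ∧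
    (fun R1 => v R1 - (Real.sqrt (2 * Cp * CS) - Real.sqrt Cz)) =O[atTop]
      (fun R1 => Real.exp (-2 * R1 / Real.sqrt Cz)) := by
  have hs : 0 < √Cz := sqrt_pos.mpr hz
  have hO : (fun R1 => v R1 - (√(2 * Cp * CS) - √Cz)) =O[atTop]
      (fun R1 => exp (-2 * R1 / √Cz)) := by
    refine IsBigO.of_bound (4 * Cz / √(2 * Cp * CS)) ?_
    filter_upwards [eventually_ge_atTop 0] with R1 hR1
    obtain ⟨hr, hq⟩ := hR2 R1 hR1
    rw [hv, norm_eq_abs, norm_of_nonneg (exp_pos _).le]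
    calc _ ≤ √Cz ^ 2 * (1 - tanh (R1 / √Cz) ^ 2) / √(2 * Cp * CS) :=
          abs_add_mul_sub_le_of_quadratic hs.le (abs_tanh_lt_one _).le hr (by rwa [sq_sqrt hz.le])
      _ ≤ Cz * (4 * exp (-2 * (R1 / √Cz))) / √(2 * Cp * CS) := by
          rw [sq_sqrt hz.le]
          gcongr
          exact one_sub_tanh_sq_le _
      _ = 4 * Cz / √(2 * Cp * CS) * exp (-2 * R1 / √Cz) := by ring_nf
  have hexp : Tendsto (fun R1 => exp (-2 * R1 / √Cz)) atTop (nhds 0) :=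
    tendsto_exp_atBot.comp ((tendsto_id.const_mul_atTop_of_neg (by norm_num)).atBot_div_const hs)
  refine ⟨?_, hO⟩
  simpa using (hO.trans_tendsto hexp).add_const (√(2 * Cp * CS) - √Cz)

/-- Exponential convergence of the 1D front speed
`v(R₁) = R₂(R₁) + √C_z tanh(R₁/√C_z)` to the traveling-wave speed
`√(2C_pC_S) − √C_z`, with error `O(e^{−2R₁/√C_z})`. -/
theorem stmt5 (Cz Cp CS : ℝ) (hz : 0 < Cz) (hp : 0 < Cp) (hs : 0 < CS)
    (h : Real.sqrt (2 * Cp * CS) > 2 * Real.sqrt Cz)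
    (R2 : ℝ → ℝ)
    (hR2 : ∀ R1 : ℝ, 0 ≤ R1 → 0 ≤ R2 R1 ∧
      (R2 R1) ^ 2 + 2 * Real.sqrt Cz * (1 + Real.tanh (R1 / Real.sqrt Cz)) * R2 R1 +
        2 * Cz * (1 + Real.tanh (R1 / Real.sqrt Cz)) - 2 * Cp * CS = 0)
    (v : ℝ → ℝ)
    (hv : ∀ R1, v R1 = R2 R1 + Real.sqrt Cz * Real.tanh (R1 / Real.sqrt Cz)) :
    Tendsto v atTop (nhds (Real.sqrt (2 * Cp * CS) - Real.sqrt Cz)) ∧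
    (fun R1 => v R1 - (Real.sqrt (2 * Cp * CS) - Real.sqrt Cz)) =O[atTop]
      (fun R1 => Real.exp (-2 * R1 / Real.sqrt Cz)) :=
  stmt5_general Cz Cp CS hz R2 hR2 v hv
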